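/- arXiv:1402.2269 — 6 statements merged into one kernel-verified Lean document; each statement's English description precedes it below -/
import Mathlib

section
/- Let G be a commutative group, q a prime, and g, h : G elements with g^q = 1 and h^q = 1 (so exponentiation by elements of ZMod q is well defined via representatives). If a, b, a', b' : ZMod q satisfy g^a * h^b = g^{a'} * h^{b'} and a ≠ a', then g = h^{(b' - b) / (a - a')}, where the quotient is computed in the field ZMod q. -/
lemma pow_val_key {G : Type*} [CommGroup G] {q : ℕ} (x : G) (hx : x ^ q = 1)
    (n : ℕ) : x ^ (n % q) = x ^ n := by
  conv_rhs => rw [← Nat.mod_add_div n q]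
  rw [pow_add, pow_mul, hx, one_pow, mul_one]

lemma pow_val_add {G : Type*} [CommGroup G] {q : ℕ} [NeZero q] (x : G)
    (hx : x ^ q = 1) (e1 e2 : ZMod q) :
    x ^ (e1 + e2).val = x ^ e1.val * x ^ e2.val := by
  rw [ZMod.val_add, pow_val_key x hx, pow_add]

lemma pow_val_mul {G : Type*} [CommGroup G] {q : ℕ} [NeZero q] (x : G)
    (hx : x ^ q = 1) (e1 e2 : ZMod q) :
    x ^ (e1 * e2).val = (x ^ e1.val) ^ e2.val := by
  rw [ZMod.val_mul, pow_val_key x hx, pow_mul]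

/-- Discrete-logarithm extraction from an equivocated Pedersen commitment:
if `g^a * h^b = g^a' * h^b'` with `a ≠ a'`, then `g = h^((b' - b)/(a - a'))`,
exponents being elements of `ZMod q` raised via their natural-number
representatives (well defined as `g^q = h^q = 1`). -/
theorem pedersen_equivocation_dlog {G : Type*} [CommGroup G] (q : ℕ)
    [Fact (Nat.Prime q)] (g h : G) (hg : g ^ q = 1) (hh : h ^ q = 1)
    (a b a' b' : ZMod q)
    (heq : g ^ a.val * h ^ b.val = g ^ a'.val * h ^ b'.val)
    (hne : a ≠ a') :
    g = h ^ ((b' - b) / (a - a')).val := by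
  have hq : q.Prime := Fact.out
  haveI : NeZero q := ⟨hq.ne_zero⟩
  have hc : a - a' ≠ 0 := sub_ne_zero.mpr hne
  have key : g ^ (a - a').val = h ^ (b' - b).val := by
    have h1 : g ^ a.val = g ^ (a - a').val * g ^ a'.val := by
      rw [← pow_val_add g hg, sub_add_cancel]
    have h2 : h ^ b'.val = h ^ (b' - b).val * h ^ b.val := by
      rw [← pow_val_add h hh, sub_add_cancel]
    apply mul_right_cancel (b := g ^ a'.val * h ^ b.val)
    rw [← mul_assoc, ← mul_assoc, mul_comm (h ^ (b' - b).val) (g ^ a'.val),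
      ← h1, heq, h2, mul_assoc]
  have hdiv : (b' - b) / (a - a') = (b' - b) * (a - a')⁻¹ := div_eq_mul_inv _ _
  rw [hdiv, pow_val_mul h hh, ← key, ← pow_val_mul g hg,
    mul_inv_cancel₀ hc, ZMod.val_one, pow_one]
end

section
/- Let G be a commutative group, q a prime, and g, h : G with g^q = 1, h of order exactly q, and g not lying in the submonoid of powers of h. If a, b, a', b' : ZMod q satisfy g^a * h^b = g^{a'} * h^{b'}, then a = a' and b = b'. In other words, under these hypotheses the Pedersen commitment map (a, b) ↦ g^a * h^b is injective (binding). -/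
private lemma pow_mod_q {G : Type*} [CommGroup G] {q : ℕ} {g : G} (hg : g ^ q = 1)
    (n : ℕ) : g ^ (n % q) = g ^ n := by
  conv_rhs => rw [← Nat.mod_add_div n q, pow_add, pow_mul, hg, one_pow, mul_one]

private lemma pow_val_add_s3 {G : Type*} [CommGroup G] {q : ℕ} [Fact (Nat.Prime q)]
    {g : G} (hg : g ^ q = 1) (x y : ZMod q) :
    g ^ (x + y).val = g ^ x.val * g ^ y.val := by
  rw [ZMod.val_add, pow_mod_q hg, pow_add]

private lemma pow_val_mul_s3 {G : Type*} [CommGroup G] {q : ℕ} [Fact (Nat.Prime q)]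
    {g : G} (hg : g ^ q = 1) (x y : ZMod q) :
    g ^ (x * y).val = (g ^ x.val) ^ y.val := by
  rw [ZMod.val_mul, pow_mod_q hg, pow_mul]

/-- Binding property of Pedersen commitments: if `g` is not a power of `h`
(`h` of order exactly `q`, `g^q = 1`), then `g^a * h^b = g^a' * h^b'`
forces `a = a'` and `b = b'`. -/
theorem pedersen_binding {G : Type*} [CommGroup G] (q : ℕ)
    [Fact (Nat.Prime q)] (g h : G) (hg : g ^ q = 1) (hh : orderOf h = q)
    (hgh : g ∉ Submonoid.powers h)
    (a b a' b' : ZMod q)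
    (heq : g ^ a.val * h ^ b.val = g ^ a'.val * h ^ b'.val) :
    a = a' ∧ b = b' := by
  have hq := (Fact.out : Nat.Prime q)
  have hh1 : h ^ q = 1 := by rw [← hh]; exact pow_orderOf_eq_one h
  -- key: g^((a-a').val) = h^((b'-b).val)
  have key : g ^ (a - a').val = h ^ (b' - b).val := by
    have h1 : g ^ (a - a').val * g ^ a'.val = g ^ a.val := by
      rw [← pow_val_add_s3 hg, sub_add_cancel]
    have h2 : h ^ (b' - b).val * h ^ b.val = h ^ b'.val := by
      rw [← pow_val_add_s3 hh1, sub_add_cancel]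
    have : g ^ (a - a').val * g ^ a'.val * h ^ b.val
        = h ^ (b' - b).val * h ^ b.val * g ^ a'.val := by
      rw [h1, h2, heq]; exact mul_comm _ _
    exact mul_right_cancel (mul_right_cancel (by rw [this]; rw [mul_right_comm]))
  have haa : a = a' := by
    by_contra hne
    have hd : a - a' ≠ 0 := sub_ne_zero.mpr hne
    apply hgh
    have : g ^ ((a - a') * (a - a')⁻¹).val = (h ^ (b' - b).val) ^ ((a-a')⁻¹).val := by
      rw [pow_val_mul_s3 hg, key]
    rw [ZMod.mul_inv_of_unit _ (Ne.isUnit hd)] at this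
    have hq2 : 1 < q := hq.one_lt
    have hv1 : (1 : ZMod q).val = 1 := ZMod.val_one q
    rw [hv1, pow_one] at this
    rw [this, ← pow_mul]
    exact ⟨_, rfl⟩
  subst haa
  refine ⟨rfl, ?_⟩
  rw [sub_self, ZMod.val_zero, pow_zero] at key
  have : h ^ (b' - b).val = 1 := key.symm
  have hdvd : orderOf h ∣ (b' - b).val := orderOf_dvd_of_pow_eq_one this
  rw [hh] at hdvd
  have hz : b' - b = 0 := by
    rcases Nat.eq_zero_or_pos (b' - b).val with h0 | hpos
    · exact (ZMod.val_eq_zero _).mp h0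
    · exact absurd ((b' - b).val_lt) (not_lt.mpr (Nat.le_of_dvd hpos hdvd))
  exact (sub_eq_zero.mp hz).symm
end

section
/- (Theorem 2) Let G be a commutative group, q a prime, g, h : G with g^q = h^q = 1 and g not in the submonoid of powers of h. Suppose participant P_i's round-1 and round-2 values are O₁ = K₁ + M₁ and O₂ = K₂ + M₂ in ZMod q, with published commitments c₁ = g^{K₁} * h^{r₁} and c₂ = g^{K₂} * h^{r₂}. If P_i exhibits a witness α : ZMod q with c₁ * c₂⁻¹ = g^{O₁ - O₂} * h^{α}, then M₁ = M₂, i.e. the two ciphertexts encode the same message. -/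
section aux
variable {G : Type*} [CommGroup G] {q : ℕ} [NeZero q]

omit [NeZero q] in
lemma zpv_mul (a : G) (ha : a ^ q = 1) (x y : ZMod q) :
    a ^ (x * y).val = (a ^ x.val) ^ y.val := by
  rw [← pow_mul, ZMod.val_mul, ← pow_eq_pow_mod _ ha]

lemma zpv_add (a : G) (ha : a ^ q = 1) (x y : ZMod q) :
    a ^ (x + y).val = a ^ x.val * a ^ y.val := by
  rw [← pow_add, ZMod.val_add, ← pow_eq_pow_mod _ ha]

end aux

/-- Theorem 2: if `O₁ = K₁ + M₁`, `O₂ = K₂ + M₂` with commitments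
`c₁ = g^{K₁} h^{r₁}`, `c₂ = g^{K₂} h^{r₂}`, and the participant exhibits `α`
with `c₁ * c₂⁻¹ = g^{O₁ - O₂} h^{α}`, then `M₁ = M₂`. -/
theorem dc_same_message {G : Type*} [CommGroup G] (q : ℕ)
    [Fact (Nat.Prime q)] (g h : G) (hg : g ^ q = 1) (hh : h ^ q = 1)
    (hgh : g ∉ Submonoid.powers h)
    (K₁ K₂ r₁ r₂ M₁ M₂ O₁ O₂ : ZMod q)
    (hO₁ : O₁ = K₁ + M₁) (hO₂ : O₂ = K₂ + M₂)
    (c₁ c₂ : G)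
    (hc₁ : c₁ = g ^ K₁.val * h ^ r₁.val)
    (hc₂ : c₂ = g ^ K₂.val * h ^ r₂.val)
    (α : ZMod q)
    (hwit : c₁ * c₂⁻¹ = g ^ (O₁ - O₂).val * h ^ α.val) :
    M₁ = M₂ := by
  subst hc₁ hc₂ hO₁ hO₂
  by_contra hne
  set d : ZMod q := M₂ - M₁ with hd
  set s : ZMod q := (K₁ + M₁) - (K₂ + M₂) with hs
  set e : ZMod q := α + r₂ - r₁ with he
  have eg : g ^ K₁.val = g ^ d.val * (g ^ s.val * g ^ K₂.val) := by
    rw [← zpv_add g hg, ← zpv_add g hg]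
    congr 1
    rw [hd, hs]; ring
  have eh : h ^ α.val * h ^ r₂.val = h ^ e.val * h ^ r₁.val := by
    rw [← zpv_add h hh, ← zpv_add h hh]
    congr 1
    rw [he]; ring
  have hwit' : g ^ K₁.val * h ^ r₁.val
      = (g ^ s.val * h ^ α.val) * (g ^ K₂.val * h ^ r₂.val) := by
    calc g ^ K₁.val * h ^ r₁.val
        = (g ^ K₁.val * h ^ r₁.val * (g ^ K₂.val * h ^ r₂.val)⁻¹)
            * (g ^ K₂.val * h ^ r₂.val) := by
          rw [inv_mul_cancel_right]
      _ = (g ^ s.val * h ^ α.val) * (g ^ K₂.val * h ^ r₂.val) := by rw [hwit]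
  have key : g ^ d.val = h ^ e.val := by
    clear hwit
    revert eg eh hwit'
    generalize g ^ d.val = F
    generalize h ^ e.val = Hh
    generalize g ^ K₁.val = P
    generalize g ^ K₂.val = B
    generalize g ^ s.val = A
    generalize h ^ r₁.val = C
    generalize h ^ r₂.val = D
    generalize h ^ α.val = E
    intro eg eh hwit'
    have h2 : F * (A * B * C) = Hh * (A * B * C) := by
      calc F * (A * B * C) = F * (A * B) * C := by group
        _ = P * C := by rw [eg]
        _ = (A * E) * (B * D) := hwit'
        _ = A * (E * D) * B := by ac_rfl
        _ = A * (Hh * C) * B := by rw [eh]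
        _ = Hh * (A * B * C) := by ac_rfl
    exact mul_right_cancel h2
  have hdne : d ≠ 0 := by
    rw [hd, sub_ne_zero]
    exact fun hEq => hne hEq.symm
  have : g = h ^ (e.val * d⁻¹.val) := by
    calc g = g ^ (1 : ZMod q).val := by rw [ZMod.val_one q, pow_one]
      _ = g ^ (d * d⁻¹).val := by rw [mul_inv_cancel₀ hdne]
      _ = (g ^ d.val) ^ d⁻¹.val := zpv_mul g hg d d⁻¹
      _ = (h ^ e.val) ^ d⁻¹.val := by rw [key]
      _ = h ^ (e.val * d⁻¹.val) := by rw [pow_mul]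
  exact hgh ⟨e.val * d⁻¹.val, this.symm⟩
end

section
/- (Theorem 3) Let G be a commutative group, q a prime, g, h : G with g^q = h^q = 1 and g not in the submonoid of powers of h. For rounds k = 1, …, l let O_k, K_k, r_k : ZMod q with commitments c_k = g^{K_k} * h^{r_k}, and set M_k = O_k - K_k (the message encoded in round k). Suppose there exists a witness α : ZMod q such that for every k with 2 ≤ k ≤ l, either c₁ * ∏_{j=2}^{k} c_j⁻¹ = g^{O₁ - ∑_{j=2}^{k} O_j} * h^{α} or c_k = g^{O_k} * h^{α}. Then at most one index k ∈ {2, …, l} has M_k ≠ 0, and for any such k one has M_k = M₁; i.e. at most one of the ciphertexts O₂, …, O_l encodes the same message as O₁ while all the others encode no message. -/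
/-!
Pedersen commitments are additively homomorphic, so the left-hand side of the first alternative
is the commitment to `K₁ - ∑ Kⱼ`; and they are binding, because `g ^ x = h ^ y` with `x ≠ 0`
would make `g = (g ^ x) ^ x⁻¹` a power of `h`. Hence the first alternative says
`M₁ = M₂ + ⋯ + Mₖ`, and the second says `Mₖ = 0`. So every nonzero `Mₖ` has the partial sum
`M₂ + ⋯ + Mₖ` equal to `M₁`; two consecutive nonzero terms would give equal partial sums
differing by the later term, which is impossible.
-/

open Finset

section PowVal

variable {M : Type*} [Monoid M] {n : ℕ} {a : M}

theorem pow_val_add_s6 [NeZero n] (ha : a ^ n = 1) (x y : ZMod n) :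
    a ^ (x + y).val = a ^ x.val * a ^ y.val := by
  rw [ZMod.val_add, ← pow_eq_pow_mod _ ha, pow_add]

theorem pow_val_mul_s6 [NeZero n] (ha : a ^ n = 1) (x y : ZMod n) :
    a ^ (x * y).val = (a ^ x.val) ^ y.val := by
  rw [ZMod.val_mul, ← pow_eq_pow_mod _ ha, pow_mul]

theorem mem_powers_of_pow_val_mem_powers [Fact n.Prime] (ha : a ^ n = 1) {b : M} {x : ZMod n}
    (hx : x ≠ 0) (hax : a ^ x.val ∈ Submonoid.powers b) : a ∈ Submonoid.powers b := by
  have ha_eq : a = (a ^ x.val) ^ x⁻¹.val := by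
    rw [← pow_val_mul_s6 ha, mul_inv_cancel₀ hx, ZMod.val_one, pow_one]
  rw [ha_eq]
  exact pow_mem hax _

end PowVal

section PowValGroup

variable {G : Type*} [CommGroup G] {n : ℕ} [NeZero n] {a : G}

theorem pow_val_sub (ha : a ^ n = 1) (x y : ZMod n) :
    a ^ (x - y).val = a ^ x.val / a ^ y.val := by
  rw [eq_div_iff_mul_eq', ← pow_val_add_s6 ha, sub_add_cancel]

theorem pow_val_sum {ι : Type*} (ha : a ^ n = 1) (s : Finset ι) (f : ι → ZMod n) :
    a ^ (∑ i ∈ s, f i).val = ∏ i ∈ s, a ^ (f i).val := by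
  classical
  induction s using Finset.induction with
  | empty => simp
  | insert i s hi ih => rw [sum_insert hi, prod_insert hi, pow_val_add_s6 ha, ih]

end PowValGroup

section Pedersen

variable {G : Type*} [CommGroup G] {q : ℕ} {g h : G}

def pedersenCommit (g h : G) (x r : ZMod q) : G := g ^ x.val * h ^ r.val

variable [NeZero q]

theorem pedersenCommit_sub (hg : g ^ q = 1) (hh : h ^ q = 1) (x r x' r' : ZMod q) :
    pedersenCommit g h (x - x') (r - r') = pedersenCommit g h x r / pedersenCommit g h x' r' := by
  rw [pedersenCommit, pedersenCommit, pedersenCommit, pow_val_sub hg, pow_val_sub hh,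
    mul_div_mul_comm]

theorem pedersenCommit_sum {ι : Type*} (hg : g ^ q = 1) (hh : h ^ q = 1) (s : Finset ι)
    (x r : ι → ZMod q) :
    pedersenCommit g h (∑ i ∈ s, x i) (∑ i ∈ s, r i) = ∏ i ∈ s, pedersenCommit g h (x i) (r i) := by
  rw [pedersenCommit, pow_val_sum hg, pow_val_sum hh, ← prod_mul_distrib]
  rfl

theorem eq_of_pedersenCommit_eq [Fact q.Prime] (hg : g ^ q = 1) (hh : h ^ q = 1)
    (hgh : g ∉ Submonoid.powers h) {x r x' r' : ZMod q}
    (heq : pedersenCommit g h x r = pedersenCommit g h x' r') : x = x' := by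
  by_contra hne
  have hpow : g ^ (x - x').val = h ^ (r' - r).val := by
    rw [pow_val_sub hg, pow_val_sub hh, div_eq_div_iff_mul_eq_mul, mul_comm (h ^ _)]
    exact heq
  exact hgh (mem_powers_of_pow_val_mem_powers hg (sub_ne_zero.mpr hne) (hpow ▸ ⟨_, rfl⟩))

end Pedersen

section PartialSums

variable {A : Type*} [AddCancelCommMonoid A] {f : ℕ → A} {a l : ℕ} {s : A}

theorem eq_of_sum_Ioc_eq_of_ne_zero (hf : ∀ k ∈ Ioc a l, f k ≠ 0 → ∑ j ∈ Ioc a k, f j = s)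
    {k k' : ℕ} (hk : k ∈ Ioc a l) (hk' : k' ∈ Ioc a l) (h0 : f k ≠ 0) (h0' : f k' ≠ 0) :
    k = k' := by
  classical
  by_contra hne
  wlog hlt : k < k' generalizing k k'
  · exact this hk' hk h0' h0 (Ne.symm hne) (by omega)
  have hex : ∃ j, k < j ∧ f j ≠ 0 := ⟨k', hlt, h0'⟩
  set j := Nat.find hex
  obtain ⟨hkj, hj0⟩ : k < j ∧ f j ≠ 0 := Nat.find_spec hex
  have hjl : j ≤ l := (Nat.find_min' hex ⟨hlt, h0'⟩).trans (mem_Ioc.mp hk').2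
  have hgap : ∑ i ∈ Ioc k j, f i = f j := by
    refine sum_eq_single_of_mem j (by simp [hkj]) fun i hi hij => ?_
    by_contra hi0
    exact Nat.find_min hex (lt_of_le_of_ne (mem_Ioc.mp hi).2 hij) ⟨(mem_Ioc.mp hi).1, hi0⟩
  have hsplit := sum_Ioc_consecutive f (mem_Ioc.mp hk).1.le hkj.le
  rw [hgap, hf k hk h0, hf j (mem_Ioc.mpr ⟨(mem_Ioc.mp hk).1.trans hkj, hjl⟩) hj0,
    add_eq_left] at hsplit
  exact hj0 hsplit

theorem apply_eq_of_sum_Ioc_eq_of_ne_zero (hf : ∀ k ∈ Ioc a l, f k ≠ 0 → ∑ j ∈ Ioc a k, f j = s)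
    {k : ℕ} (hk : k ∈ Ioc a l) (h0 : f k ≠ 0) : f k = s := by
  rw [← hf k hk h0, sum_eq_single_of_mem k (by simpa using (mem_Ioc.mp hk).1)]
  intro i hi hik
  by_contra hi0
  exact hik (eq_of_sum_Ioc_eq_of_ne_zero hf
    (Ioc_subset_Ioc_right (mem_Ioc.mp hk).2 hi) hk hi0 h0)

end PartialSums

/-- Theorem 3: given rounds `1, …, l` with ciphertexts `O k`, keys `K k`,
commitments `c k = g^{K k} h^{r k}` and encoded messages `M k = O k - K k`,
if there is a witness `α` such that for every `2 ≤ k ≤ l` either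
`c 1 * ∏_{j=2}^{k} (c j)⁻¹ = g^{O 1 - ∑_{j=2}^{k} O j} h^{α}` or
`c k = g^{O k} h^{α}`, then at most one `k ∈ {2, …, l}` has `M k ≠ 0`,
and any such `k` satisfies `M k = M 1`. -/
theorem dc_at_most_one_retransmission {G : Type*} [CommGroup G] (q : ℕ)
    [Fact (Nat.Prime q)] (g h : G) (hg : g ^ q = 1) (hh : h ^ q = 1)
    (hgh : g ∉ Submonoid.powers h)
    (l : ℕ) (O K r : ℕ → ZMod q)
    (c : ℕ → G) (hc : ∀ k, c k = g ^ (K k).val * h ^ (r k).val)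
    (M : ℕ → ZMod q) (hM : ∀ k, M k = O k - K k)
    (α : ZMod q)
    (hwit : ∀ k, 2 ≤ k → k ≤ l →
      (c 1 * ∏ j ∈ Finset.Icc 2 k, (c j)⁻¹ =
          g ^ (O 1 - ∑ j ∈ Finset.Icc 2 k, O j).val * h ^ α.val) ∨
        c k = g ^ (O k).val * h ^ α.val) :
    (∀ k k', 2 ≤ k → k ≤ l → 2 ≤ k' → k' ≤ l →
        M k ≠ 0 → M k' ≠ 0 → k = k') ∧
    (∀ k, 2 ≤ k → k ≤ l → M k ≠ 0 → M k = M 1) := by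
  have hc' : ∀ k, c k = pedersenCommit g h (K k) (r k) := hc
  have hIcc : ∀ k, Icc 2 k = Ioc 1 k := fun k => Icc_add_one_left_eq_Ioc 1 k
  have hsum : ∀ k ∈ Ioc 1 l, M k ≠ 0 → ∑ j ∈ Ioc 1 k, M j = M 1 := by
    intro k hk hMk
    rcases hwit k (mem_Ioc.mp hk).1 (mem_Ioc.mp hk).2 with hA | hB
    · rw [prod_inv_distrib, ← div_eq_mul_inv, hc', funext hc', ← pedersenCommit_sum hg hh,
        ← pedersenCommit_sub hg hh] at hA
      have hKO := eq_of_pedersenCommit_eq hg hh hgh hA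
      rw [hIcc] at hKO
      simp only [hM, sum_sub_distrib]
      linear_combination hKO
    · rw [hc'] at hB
      exact absurd (by rw [hM, eq_of_pedersenCommit_eq hg hh hgh hB, sub_self]) hMk
  exact ⟨fun k k' hk hkl hk' hk'l => eq_of_sum_Ioc_eq_of_ne_zero hsum
      (mem_Ioc.mpr ⟨hk, hkl⟩) (mem_Ioc.mpr ⟨hk', hk'l⟩),
    fun k hk hkl => apply_eq_of_sum_Ioc_eq_of_ne_zero hsum (mem_Ioc.mpr ⟨hk, hkl⟩)⟩
end

section
/- Let q be prime and M : Fin l → ZMod q with l ≥ 1 (index the rounds 1, …, l). Suppose that for every k with 2 ≤ k ≤ l, either ∑_{j=2}^{k} M_j = M₁ or M_k = 0. Then at most one index k ∈ {2, …, l} satisfies M_k ≠ 0, and for any such k one has M_k = M₁. -/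
/-- Combinatorial core of Theorem 3: rounds are indexed by `Fin l`
(index `i` is round `i + 1`, so round `1` is `⟨0, hl⟩`). If for every round
`k` with `2 ≤ k + 1` (i.e. `1 ≤ k.val`) either the prefix sum
`∑_{j=2}^{k} M j` equals `M 1` or `M k = 0`, then at most one round
`k ∈ {2, …, l}` has `M k ≠ 0`, and any such `k` satisfies `M k = M 1`. -/
theorem dc_prefix_sum_at_most_one (q l : ℕ) (hq : Nat.Prime q) (hl : 1 ≤ l)
    (M : Fin l → ZMod q)
    (h : ∀ k : Fin l, 1 ≤ k.val →
      (∑ j ∈ Finset.univ.filter (fun j : Fin l => 1 ≤ j.val ∧ j ≤ k), M j)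
          = M ⟨0, hl⟩ ∨
        M k = 0) :
    (∀ k k' : Fin l, 1 ≤ k.val → 1 ≤ k'.val →
        M k ≠ 0 → M k' ≠ 0 → k = k') ∧
    (∀ k : Fin l, 1 ≤ k.val → M k ≠ 0 → M k = M ⟨0, hl⟩) := by
  set S : Fin l → ZMod q := fun k =>
    ∑ j ∈ Finset.univ.filter (fun j : Fin l => 1 ≤ j.val ∧ j ≤ k), M j with hSdef
  have hS : ∀ k : Fin l, 1 ≤ k.val → M k ≠ 0 → S k = M ⟨0, hl⟩ := by
    intro k hk hMk
    rcases h k hk with h1 | h1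
    · exact h1
    · exact absurd h1 hMk
  -- no two distinct nonzero rounds with a < b
  have key : ∀ a b : Fin l, 1 ≤ a.val → a < b → M a ≠ 0 → M b ≠ 0 → False := by
    intro a b ha hab hMa hMb
    set T : Finset (Fin l) := Finset.univ.filter (fun j => a < j ∧ M j ≠ 0) with hT
    have hbT : b ∈ T := by simp [hT, hab, hMb]
    have hne : T.Nonempty := ⟨b, hbT⟩
    set c := T.min' hne with hc
    have hcT : c ∈ T := T.min'_mem hne
    rw [hT, Finset.mem_filter] at hcT
    obtain ⟨-, hac, hMc⟩ := hcT
    have hmin : ∀ j : Fin l, a < j → M j ≠ 0 → c ≤ j := by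
      intro j hj hMj
      exact T.min'_le j (by simp [hT, hj, hMj])
    have hac' : a.val < c.val := hac
    have hc1 : 1 ≤ c.val := by omega
    have hSc : S c = S a + M c := by
      simp only [hSdef]
      rw [← Finset.sum_filter_add_sum_filter_not
        (Finset.univ.filter (fun j : Fin l => 1 ≤ j.val ∧ j ≤ c)) (fun j => j ≤ a)]
      congr 1
      · rw [Finset.filter_filter]
        apply Finset.sum_congr _ (fun _ _ => rfl)
        apply Finset.filter_congr
        intro j _
        simp only [iff_def]
        constructor
        · rintro ⟨⟨h1, -⟩, h2⟩; exact ⟨h1, h2⟩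
        · rintro ⟨h1, h2⟩; exact ⟨⟨h1, le_trans h2 (le_of_lt hac)⟩, h2⟩
      · rw [Finset.filter_filter]
        apply Finset.sum_eq_single_of_mem
        · simp only [Finset.mem_filter, Finset.mem_univ, true_and]
          exact ⟨⟨hc1, le_refl c⟩, not_le.mpr hac⟩
        · intro j hj hjc
          simp only [Finset.mem_filter, Finset.mem_univ, true_and, not_le] at hj
          obtain ⟨⟨-, hjle⟩, haj⟩ := hj
          by_contra hMj
          exact hjc (le_antisymm hjle (hmin j haj hMj))
    have h1 : S c = M ⟨0, hl⟩ := hS c hc1 hMc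
    have h2 : S a = M ⟨0, hl⟩ := hS a ha hMa
    rw [h1, h2] at hSc
    exact hMc (left_eq_add.mp hSc)
  have uniq : ∀ k k' : Fin l, 1 ≤ k.val → 1 ≤ k'.val →
      M k ≠ 0 → M k' ≠ 0 → k = k' := by
    intro k k' hk hk' hMk hMk'
    rcases lt_trichotomy k k' with hlt | heq | hgt
    · exact absurd (key k k' hk hlt hMk hMk') id
    · exact heq
    · exact absurd (key k' k hk' hgt hMk' hMk) id
  refine ⟨uniq, ?_⟩
  intro k hk hMk
  have hSk : S k = M ⟨0, hl⟩ := hS k hk hMk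
  have hsum : S k = M k := by
    simp only [hSdef]
    apply Finset.sum_eq_single_of_mem
    · simp [hk]
    · intro j hj hjk
      simp only [Finset.mem_filter, Finset.mem_univ, true_and] at hj
      by_contra hMj
      exact hjk (uniq j k hj.1 hk hMj hMk)
  rw [← hsum, hSk]
end

section
/- Let q be a prime power or any natural number, n ≥ 1, and let O : Fin n → ZMod q be any vector of ciphertexts with ∑ i, O i = M for some M : ZMod q. Then for every choice of sender s : Fin n there exists a key matrix K : Fin n → Fin n → ZMod q with K i j = -K j i for all i, j (hence K i i = 0) such that O i = (∑ j, K i j) + (if i = s then M else 0) for every i. In other words, any observed family of ciphertexts summing to M is consistent with every participant being the sender: the dining cryptographers protocol with a complete key graph provides perfect sender untraceability. -/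
/-- Perfect sender untraceability: any family of ciphertexts summing to `M`
is consistent with every participant `s` being the sender, i.e. there is an
antisymmetric key matrix `K` explaining the observed ciphertexts with `s`
as sender. -/
theorem dc_sender_untraceability (q n : ℕ) (hn : 1 ≤ n)
    (O : Fin n → ZMod q) (M : ZMod q) (hsum : ∑ i, O i = M) (s : Fin n) :
    ∃ K : Fin n → Fin n → ZMod q,
      (∀ i j, K i j = - K j i) ∧
        ∀ i, O i = (∑ j, K i j) + (if i = s then M else 0) := by
  set D : Fin n → ZMod q := fun i => O i - (if i = s then M else 0) with hD
  have hDsum : ∑ i, D i = 0 := by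
    simp [hD, Finset.sum_sub_distrib, hsum]
  set i0 : Fin n := ⟨0, hn⟩ with hi0
  refine ⟨fun i j => if i = i0 then (if j = i0 then 0 else -(D j))
      else (if j = i0 then D i else 0), ?_, ?_⟩
  · intro i j
    by_cases hi : i = i0 <;> by_cases hj : j = i0 <;> simp [hi, hj]
  · intro i
    have hrow : (∑ j, if i = i0 then (if j = i0 then 0 else -(D j))
        else (if j = i0 then D i else 0)) = D i := by
      by_cases hi : i = i0
      · subst hi
        simp only [if_pos rfl, eq_self_iff_true, if_true]
        have : (∑ j, if j = i0 then 0 else -(D j))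
            = ∑ j, ((if j = i0 then D j else 0) + -(D j)) := by
          apply Finset.sum_congr rfl
          intro j _
          by_cases hj : j = i0 <;> simp [hj]
        rw [this, Finset.sum_add_distrib, Finset.sum_ite_eq' Finset.univ i0 D,
          if_pos (Finset.mem_univ _)]
        simp [hDsum]
      · simp only [if_neg hi]
        rw [Finset.sum_ite_eq' Finset.univ i0 (fun _ => D i)]
        simp
    rw [hrow]
    simp [hD]
end
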